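/- arXiv:1307.6828 — 2 statements merged into one kernel-verified Lean document; each statement's English description precedes it below -/
import Mathlib

section
/- Let a : {1, 2, 3, 4} → ℚ be the weight datum with a(1) = 1/12, a(2) = 2/3, a(3) = 1/4, a(4) = 1/3. Then the admissible transpositions in S₄ are exactly the two transpositions (1 3) and (2 4), and the group 𝒜 of admissible permutations is the subgroup of S₄ generated by (1 3) and (2 4), which is isomorphic to ℤ/2ℤ × ℤ/2ℤ. -/
/-- A transposition `(i j)` (with `i ≠ j`) is *admissible* for a weight datum
`a : Fin n → ℚ` if for every subset `S ⊆ {1,…,n} \ {i,j}` with `|S| ≥ 2` one has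
`a i + Σ_{k∈S} a k ≤ 1 ↔ a j + Σ_{k∈S} a k ≤ 1`. -/
def IsAdmissibleTransposition {n : ℕ} (a : Fin n → ℚ) (i j : Fin n) : Prop :=
  ∀ S : Finset (Fin n), i ∉ S → j ∉ S → 2 ≤ S.card →
    (a i + ∑ k ∈ S, a k ≤ 1 ↔ a j + ∑ k ∈ S, a k ≤ 1)

/-- The group `𝒜` of admissible permutations: the subgroup of `Sₙ` generated by the
admissible transpositions. -/
def admissibleGroup {n : ℕ} (a : Fin n → ℚ) : Subgroup (Equiv.Perm (Fin n)) :=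
  Subgroup.closure
    {σ | ∃ i j : Fin n, i ≠ j ∧ IsAdmissibleTransposition a i j ∧ σ = Equiv.swap i j}

/-!
Scaling the weights by `12` turns them into the integers `1, 8, 3, 4`, and each admissibility
condition into a finite check over subsets of `Fin 4`, decided by computation. The two
admissible transpositions `(1 3)` and `(2 4)` are disjoint, hence commuting, involutions, and
two distinct commuting involutions generate a group `{1, x, y, xy}` of order four and
exponent two, i.e. a Klein four-group.
-/

open Finset

namespace Subgroup

variable {G : Type*} [Group G] {x y : G}

theorem coe_closure_pair_of_commute (hx : x * x = 1) (hy : y * y = 1) (hxy : Commute x y) :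
    (closure {x, y} : Set G) = {1, x, y, x * y} := by
  have hy' (z : G) : y * (y * z) = z := by rw [← mul_assoc, hy, one_mul]
  have hxi : x⁻¹ = x := inv_eq_of_mul_eq_one_right hx
  have hyi : y⁻¹ = y := inv_eq_of_mul_eq_one_right hy
  refine subset_antisymm (fun z hz => ?_) ?_
  · induction hz using closure_induction with
    | mem z hz => rcases hz with rfl | rfl <;> simp
    | one => simp
    | mul a b _ _ ha hb =>
      rcases ha with rfl | rfl | rfl | rfl <;> rcases hb with rfl | rfl | rfl | rfl <;>
        simp [hx, hy, hy', hxy.eq, mul_assoc, hxy.left_comm]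
    | inv a _ ha =>
      rcases ha with rfl | rfl | rfl | rfl <;> simp [hxi, hyi, hxy.eq]
  · rintro z (rfl | rfl | rfl | rfl)
    exacts [one_mem _, subset_closure (by simp), subset_closure (by simp),
      mul_mem (subset_closure (by simp)) (subset_closure (by simp))]

theorem isKleinFour_closure_pair (hx : x * x = 1) (hy : y * y = 1) (hxy : Commute x y)
    (hx1 : x ≠ 1) (hy1 : y ≠ 1) (hne : x ≠ y) : IsKleinFour (closure {x, y}) := by
  have hcoe := coe_closure_pair_of_commute hx hy hxy
  have hxy1 : x * y ≠ 1 := fun h =>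
    hne (by rw [eq_inv_of_mul_eq_one_right h, inv_eq_of_mul_eq_one_right hx])
  have hsq : ∀ g ∈ ({1, x, y, x * y} : Set G), g * g = 1 := by
    simp only [Set.forall_mem_insert, Set.mem_singleton_iff, forall_eq]
    exact ⟨one_mul 1, hx, hy, by rw [hxy.symm.mul_mul_mul_comm, hx, hy, one_mul]⟩
  have : Nontrivial (closure {x, y}) :=
    (nontrivial_iff_exists_ne_one _).2 ⟨x, subset_closure (by simp), hx1⟩
  refine ⟨?_, (Monoid.exponent_eq_prime_iff Nat.prime_two).2 fun g hg => orderOf_eq_prime ?_ hg⟩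
  · rw [← SetLike.coe_sort_coe, Nat.card_coe_set_eq, hcoe, Set.ncard_eq_four]
    exact ⟨1, x, y, x * y, hx1.symm, hy1.symm, hxy1.symm, hne, by simpa using hy1,
      by simpa using hx1, rfl⟩
  · ext
    exact (sq (g : G)).trans (hsq g (hcoe ▸ g.2))

end Subgroup

theorem isAdmissibleTransposition_div_iff {n : ℕ} (b : Fin n → ℕ) {N : ℕ} (hN : 0 < N)
    (i j : Fin n) :
    IsAdmissibleTransposition (fun k => (b k : ℚ) / N) i j ↔
      ∀ S : Finset (Fin n), i ∉ S → j ∉ S → 2 ≤ #S →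
        (b i + ∑ k ∈ S, b k ≤ N ↔ b j + ∑ k ∈ S, b k ≤ N) := by
  have hscale (l : Fin n) (S : Finset (Fin n)) :
      (b l : ℚ) / N + ∑ k ∈ S, (b k : ℚ) / N ≤ 1 ↔ b l + ∑ k ∈ S, b k ≤ N := by
    rw [← sum_div, ← add_div, div_le_one (by positivity)]
    exact_mod_cast Iff.rfl
  simp only [IsAdmissibleTransposition, hscale]

theorem isAdmissibleTransposition_klein_iff (i j : Fin 4) (hij : i ≠ j) :
    IsAdmissibleTransposition ![1/12, 2/3, 1/4, 1/3] i j ↔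
      (i = 0 ∧ j = 2) ∨ (i = 2 ∧ j = 0) ∨ (i = 1 ∧ j = 3) ∨ (i = 3 ∧ j = 1) := by
  have hweights : (![1/12, 2/3, 1/4, 1/3] : Fin 4 → ℚ) =
      fun k => ((![1, 8, 3, 4] : Fin 4 → ℕ) k : ℚ) / (12 : ℕ) := by
    ext k; fin_cases k <;> norm_num
  rw [hweights, isAdmissibleTransposition_div_iff _ (by norm_num)]
  revert i j
  decide

theorem admissibleGroup_klein :
    admissibleGroup ![1/12, 2/3, 1/4, 1/3] =
      Subgroup.closure {Equiv.swap (0 : Fin 4) 2, Equiv.swap (1 : Fin 4) 3} := by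
  rw [admissibleGroup]
  congr 1
  ext σ
  constructor
  · rintro ⟨i, j, hij, hadm, rfl⟩
    rcases (isAdmissibleTransposition_klein_iff i j hij).1 hadm with
      ⟨rfl, rfl⟩ | ⟨rfl, rfl⟩ | ⟨rfl, rfl⟩ | ⟨rfl, rfl⟩ <;> simp [Equiv.swap_comm]
  · rintro (rfl | rfl)
    · exact ⟨0, 2, by decide, (isAdmissibleTransposition_klein_iff 0 2 (by decide)).2 (by simp),
        rfl⟩
    · exact ⟨1, 3, by decide, (isAdmissibleTransposition_klein_iff 1 3 (by decide)).2 (by simp),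
        rfl⟩

/-- For the weight datum `(1/12, 2/3, 1/4, 1/3)` on `4` markings
(markings `1,2,3,4` being indices `0,1,2,3`), the admissible transpositions are exactly
`(1 3)` and `(2 4)`, and the group of admissible permutations is the subgroup generated by
these two transpositions, isomorphic to `ℤ/2ℤ × ℤ/2ℤ`. -/
theorem admissibleGroup_of_weights_klein
    (a : Fin 4 → ℚ) (ha : a = ![1/12, 2/3, 1/4, 1/3]) :
    (∀ i j : Fin 4, i ≠ j →
      (IsAdmissibleTransposition a i j ↔
        ((i = 0 ∧ j = 2) ∨ (i = 2 ∧ j = 0) ∨ (i = 1 ∧ j = 3) ∨ (i = 3 ∧ j = 1)))) ∧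
    admissibleGroup a =
      Subgroup.closure {Equiv.swap (0 : Fin 4) 2, Equiv.swap (1 : Fin 4) 3} ∧
    Nonempty ((↥(admissibleGroup a)) ≃* Multiplicative (ZMod 2 × ZMod 2)) := by
  subst ha
  refine ⟨isAdmissibleTransposition_klein_iff, admissibleGroup_klein, ?_⟩
  have : IsKleinFour (Subgroup.closure {Equiv.swap (0 : Fin 4) 2, Equiv.swap (1 : Fin 4) 3}) :=
    Subgroup.isKleinFour_closure_pair (Equiv.swap_mul_self 0 2) (Equiv.swap_mul_self 1 3)
      (Equiv.Perm.disjoint_swap_swap (by decide)).commute (by decide) (by decide) (by decide)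
  rw [admissibleGroup_klein]
  exact IsKleinFour.nonempty_mulEquiv
end

section
/- Let K be a field and m ≥ 2. For each i ∈ {0, …, m} let Mᵢ := ∏_{j ≠ i} xⱼ ∈ K[x₀, …, x_m], a monomial of degree m, and for a nonempty subset S ⊊ {0, …, m} let I_S ⊆ K[x₀, …, x_m] be the ideal generated by the variables {xⱼ : j ∉ S}. Then a homogeneous polynomial P ∈ K[x₀, …, x_m] of degree m satisfies P ∈ I_S^{m−|S|} for every nonempty subset S ⊊ {0, …, m} with |S| ≤ m−1 if and only if P lies in the K-linear span of M₀, …, M_m. In particular, the K-vector space of such polynomials has dimension m+1 (the monomials M₀, …, M_m being linearly independent). -/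
/-!
Only the singleton conditions matter for the forward direction: `⟨xₖ : k ≠ j⟩ ^ (m - 1)` is a
monomial ideal, so every monomial of `P` has degree at least `m - 1` in the variables other
than `xⱼ`, hence degree at most `1` in `xⱼ`. A squarefree monomial of degree `m` in `m + 1`
variables misses exactly one of them, so it is some `Mᵢ`. Conversely `Mᵢ` contains all but at
most one of the variables `xⱼ`, `j ∉ S`, so it is a multiple of a product of `m - |S|`
generators of `I_S`.
-/

open MvPolynomial Finset

namespace MvPolynomial

variable {R σ : Type*} [CommSemiring R]

theorem le_sum_of_mem_pow_span_X {T : Finset σ} {k : ℕ} {P : MvPolynomial σ R}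
    (hP : P ∈ Ideal.span (X '' (T : Set σ)) ^ k) {d : σ →₀ ℕ} (hd : d ∈ P.support) :
    k ≤ ∑ j ∈ T, d j := by
  suffices Ideal.span (X '' (T : Set σ)) ^ k ≤ restrictSupportIdeal R {d | k ≤ ∑ j ∈ T, d j}
      (fun _ _ hab ha => ha.trans (sum_le_sum fun j _ => hab j)) from this hP hd
  classical
  clear hP hd P d
  induction k with
  | zero => intro _ _ _ _; exact Nat.zero_le _
  | succ k ih =>
    rw [pow_succ, Ideal.mul_le]
    intro r hr s hs d hd
    obtain ⟨a, ha, b, hb, rfl⟩ := mem_add.mp (support_mul r s hd)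
    obtain ⟨j, hj, hbj⟩ := mem_ideal_span_X_image.mp hs b hb
    have hb1 : 1 ≤ ∑ j ∈ T, b j := (Nat.one_le_iff_ne_zero.mpr hbj).trans
      (single_le_sum (fun _ _ => Nat.zero_le _) hj)
    have ha' : k ≤ ∑ j ∈ T, a j := ih hr ha
    show k + 1 ≤ ∑ j ∈ T, (a + b) j
    simp only [Finsupp.add_apply, sum_add_distrib]
    omega

theorem prod_X_mem_pow_span_X {A T : Finset σ} (hAT : A ⊆ T) :
    ∏ j ∈ A, (X j : MvPolynomial σ R) ∈ Ideal.span (X '' (T : Set σ)) ^ #A := by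
  simpa using Ideal.prod_mem_prod (I := fun _ => Ideal.span (X '' (T : Set σ)))
    fun j hj => Ideal.subset_span ⟨j, hAT hj, rfl⟩

section Cremona

variable (R) [Fintype σ] [DecidableEq σ]

noncomputable def cremonaMonomial (i : σ) : MvPolynomial σ R := ∏ j ∈ univ.erase i, X j

variable {R}

theorem cremonaMonomial_eq_monomial (i : σ) :
    cremonaMonomial R i = monomial (∑ j ∈ univ.erase i, Finsupp.single j 1) 1 := by
  simp only [cremonaMonomial, monomial_sum_one, X]

theorem linearIndependent_cremonaMonomial [Nontrivial R] :
    LinearIndependent R (cremonaMonomial R : σ → MvPolynomial σ R) := by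
  have hinj : Function.Injective fun i : σ => ∑ j ∈ univ.erase i, Finsupp.single j 1 := by
    intro i i' (h : ∑ j ∈ univ.erase i, _ = ∑ j ∈ univ.erase i', _)
    have hsum : ∀ i : σ, ∑ j ∈ univ.erase i, Finsupp.single j 1 + Finsupp.single i 1 =
        ∑ j, Finsupp.single j 1 := fun i => sum_erase_add _ _ (mem_univ i)
    have := (hsum i).trans (hsum i').symm
    rw [h, add_right_inj] at this
    exact Finsupp.single_left_injective one_ne_zero this
  rw [show cremonaMonomial R = _ from _root_.funext cremonaMonomial_eq_monomial]
  simpa only [coe_basisMonomials, Function.comp_def] using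
    (basisMonomials σ R).linearIndependent.comp _ hinj

theorem cremonaMonomial_mem_pow_span_X (T : Finset σ) (i : σ) :
    cremonaMonomial R i ∈ Ideal.span (X '' (T : Set σ)) ^ (#T - 1) := by
  have hsub : T.erase i ⊆ univ.erase i := erase_subset_erase i (subset_univ T)
  rw [cremonaMonomial, ← prod_sdiff hsub]
  exact Ideal.mul_mem_left _ _ (Ideal.pow_le_pow_right pred_card_le_card_erase
    (prod_X_mem_pow_span_X (erase_subset i T)))

theorem span_cremonaMonomial_le_pow_span_X (T : Finset σ) :
    Submodule.span R (Set.range (cremonaMonomial R)) ≤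
      (Ideal.span (X '' (T : Set σ)) ^ (#T - 1)).restrictScalars R :=
  Submodule.span_le.mpr (Set.range_subset_iff.mpr (cremonaMonomial_mem_pow_span_X T))

theorem monomial_mem_span_cremonaMonomial {d : σ →₀ ℕ} (hd : ∀ j, d j ≤ 1)
    (hdeg : d.degree + 1 = Fintype.card σ) (c : R) :
    monomial d c ∈ Submodule.span R (Set.range (cremonaMonomial R)) := by
  have hcard : #d.support = d.degree := by
    rw [Finsupp.degree_apply, card_eq_sum_ones]
    exact sum_congr rfl fun j hj => le_antisymm (Finsupp.mem_support_iff.mp hj |>.bot_lt) (hd j)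
  obtain ⟨i, hi⟩ : ∃ i, d.supportᶜ = {i} := card_eq_one.mp (by rw [card_compl]; omega)
  have hsupp : d.support = univ.erase i := by rw [← compl_singleton, ← hi, compl_compl]
  have hmon : monomial d (1 : R) = cremonaMonomial R i := by
    rw [monomial_eq, C_1, one_mul, Finsupp.prod, hsupp, cremonaMonomial]
    refine prod_congr rfl fun j hj => ?_
    rw [← hsupp] at hj
    rw [le_antisymm (hd j) (Finsupp.mem_support_iff.mp hj |> Nat.one_le_iff_ne_zero.mpr), pow_one]
  rw [← mul_one c, ← smul_eq_mul, ← smul_monomial, hmon]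
  exact Submodule.smul_mem _ _ (Submodule.subset_span ⟨i, rfl⟩)

theorem le_one_of_mem_pow_span_X_compl_singleton {P : MvPolynomial σ R} {n : ℕ}
    (hP : P.IsHomogeneous n) {j : σ}
    (hj : P ∈ Ideal.span (X '' (({j}ᶜ : Finset σ) : Set σ)) ^ (n - 1))
    {d : σ →₀ ℕ} (hd : d ∈ P.support) : d j ≤ 1 := by
  have hrest : n - 1 ≤ ∑ i ∈ {j}ᶜ, d i := le_sum_of_mem_pow_span_X hj hd
  have htotal : ∑ i ∈ {j}ᶜ, d i + ∑ i ∈ {j}, d i = n := by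
    rw [sum_compl_add_sum, ← Finsupp.degree_eq_sum]
    exact (hP.degree_eq_sum_deg_support hd).symm
  rw [sum_singleton] at htotal
  omega

theorem mem_span_cremonaMonomial_of_forall_mem_pow {P : MvPolynomial σ R} {n : ℕ}
    (hP : P.IsHomogeneous n) (hn : n + 1 = Fintype.card σ)
    (h : ∀ j : σ, P ∈ Ideal.span (X '' (({j}ᶜ : Finset σ) : Set σ)) ^ (n - 1)) :
    P ∈ Submodule.span R (Set.range (cremonaMonomial R)) := by
  rw [← support_sum_monomial_coeff P]
  refine Submodule.sum_mem _ fun d hd => monomial_mem_span_cremonaMonomial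
    (fun j => le_one_of_mem_pow_span_X_compl_singleton hP (h j) hd) ?_ _
  rw [← hn, Finsupp.degree_apply, ← hP.degree_eq_sum_deg_support hd]

end Cremona

end MvPolynomial

/-- Let `K` be a field and `m ≥ 2`. For `i ∈ {0,…,m}` let
`Mᵢ = ∏_{j ≠ i} xⱼ`, and for a nonempty proper subset `S` of the indices let `I_S` be the
ideal generated by the variables `xⱼ` with `j ∉ S`. A homogeneous polynomial `P` of degree
`m` lies in `I_S ^ (m − |S|)` for every nonempty proper `S` with `|S| ≤ m − 1` if and only
if `P` lies in the `K`-linear span of `M₀, …, M_m`; moreover the `Mᵢ` are linearly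
independent (so this space of polynomials has dimension `m + 1`). -/
theorem cremona_linear_system_span
    (K : Type*) [Field K] (m : ℕ) (hm : 2 ≤ m) :
    (∀ P : MvPolynomial (Fin (m + 1)) K, P.IsHomogeneous m →
      ((∀ S : Finset (Fin (m + 1)), S.Nonempty → S ≠ Finset.univ → S.card ≤ m - 1 →
          P ∈ (Ideal.span ((fun j => (X j : MvPolynomial (Fin (m + 1)) K)) ''
                {j | j ∉ S})) ^ (m - S.card)) ↔
        P ∈ Submodule.span K
          (Set.range (fun i : Fin (m + 1) =>
            ∏ j ∈ Finset.univ.erase i, (X j : MvPolynomial (Fin (m + 1)) K))))) ∧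
    LinearIndependent K
      (fun i : Fin (m + 1) =>
        ∏ j ∈ Finset.univ.erase i, (X j : MvPolynomial (Fin (m + 1)) K)) := by
  have hcompl (S : Finset (Fin (m + 1))) : {j | j ∉ S} = ((Sᶜ : Finset _) : Set (Fin (m + 1))) :=
    (coe_compl S).symm
  refine ⟨fun P hP => ⟨fun h => ?_, fun h S _ _ hS => ?_⟩, linearIndependent_cremonaMonomial⟩
  · have : Nontrivial (Fin (m + 1)) := Fin.nontrivial_iff_two_le.mpr (by omega)
    refine mem_span_cremonaMonomial_of_forall_mem_pow hP (Fintype.card_fin _).symm fun j => ?_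
    simpa only [hcompl, card_singleton] using
      h {j} (singleton_nonempty j) (singleton_ne_univ j) (by rw [card_singleton]; omega)
  · have hk : m - #S = #Sᶜ - 1 := by rw [card_compl, Fintype.card_fin]; omega
    rw [hcompl, hk]
    exact span_cremonaMonomial_le_pow_span_X Sᶜ h
end
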